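/- arXiv:2206.08631 — 3 statements merged into one kernel-verified Lean document; each statement's English description precedes it below -/
import Mathlib

section
/- Fix a weight function f : rows(A) → ℕ on the rows of a binary matrix A with n columns, and let A' be A with an appended zero column. For any tour of the columns of A' under the weighted Hamming distance D(c,c') = Σ_k f(k)·|c(k) − c'(k)|, the tour length equals 2·Σ_k f(k)·cons1(r_k^{π(A)}), where π is the column permutation of A read from the tour starting after the zero column. Consequently, a minimum-length tour yields a permutation minimizing Σ_k f(k)·cons1(r_k^{π(A)}). -/
/-!
Along a tour the weighted distance splits row by row: row `k` contributes `f k` times the number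
of value changes of that row around the cycle. Read from the zero column, the cycle of row `k` is
`false` followed by the permuted row, and every maximal block of ones is entered by exactly one
rise `false → true`. On any cycle rises and falls are equinumerous, so there are twice as many
changes as blocks. Every column permutation is read off some tour in this way, so a shortest tour
yields a minimizing permutation.
-/

open Finset

def rowExt (n : ℕ) (r : Fin n → Bool) : ℕ → Bool :=
  fun j => if h : j < n then r ⟨j, h⟩ else false

def cons1Row (n : ℕ) (r : Fin n → Bool) : ℕ :=
  ((Finset.range n).filter
    (fun j => rowExt n r j = true ∧ (j = 0 ∨ rowExt n r (j - 1) = false))).card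

def cons1 {m n : ℕ} (A : Fin m → Fin n → Bool) : ℕ :=
  ∑ i, cons1Row n (A i)

def appendZero {m n : ℕ} (A : Fin m → Fin n → Bool) : Fin m → Fin (n + 1) → Bool :=
  fun i j => if h : (j : ℕ) < n then A i ⟨j, h⟩ else false

def colHam {m N : ℕ} (B : Fin m → Fin N → Bool) (a b : Fin N) : ℕ :=
  hammingDist (fun i => B i a) (fun i => B i b)

def wDist {m N : ℕ} (f : Fin m → ℕ) (B : Fin m → Fin N → Bool) (a b : Fin N) : ℕ :=
  ∑ k, f k * (if B k a = B k b then 0 else 1)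

section Rises

variable {α : Type*} [Fintype α] (e : Equiv.Perm α) (d : α → Bool)

theorem card_rise_eq_card_fall :
    #{t | d t = false ∧ d (e t) = true} = #{t | d t = true ∧ d (e t) = false} := by
  have hcard : #{t | d t = true} = #{t | d (e t) = true} :=
    card_equiv e.symm (by simp)
  rw [← card_filter_add_card_filter_not (fun t => d (e t) = true),
    ← card_filter_add_card_filter_not (fun t => d t = true) (s := {t | d (e t) = true})]
    at hcard
  simp only [filter_filter, Bool.not_eq_true] at hcard
  simp only [and_comm (b := d (e _) = _)] at hcard ⊢
  omega

theorem card_ne_eq_two_mul_card_rise :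
    #{t | d t ≠ d (e t)} = 2 * #{t | d t = false ∧ d (e t) = true} := by
  classical
  have hsplit : ({t | d t ≠ d (e t)} : Finset α) =
      ({t | d t = false ∧ d (e t) = true} : Finset α) ∪
        ({t | d t = true ∧ d (e t) = false} : Finset α) := by
    ext t
    simp only [mem_filter, mem_union, mem_univ, true_and]
    cases d t <;> cases d (e t) <;> decide
  rw [hsplit, card_union_of_disjoint, ← card_rise_eq_card_fall, two_mul]
  exact disjoint_filter.2 fun t _ h h' => by simp_all

end Rises

theorem rowExt_coe {n : ℕ} (s : Fin n → Bool) (j : Fin n) : rowExt n s j = s j := by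
  simp [rowExt]

theorem cons_false_eq_rowExt {n : ℕ} (s : Fin n → Bool) (t : Fin (n + 1)) :
    (Fin.cons false s : Fin (n + 1) → Bool) t = ((t : ℕ) ≠ 0 && rowExt n s (t - 1)) := by
  cases t using Fin.cases with
  | zero => simp
  | succ j => simp [rowExt_coe]

theorem cons1Row_eq_card_rise (n : ℕ) (s : Fin n → Bool) :
    cons1Row n s = #{t : Fin (n + 1) |
      (Fin.cons false s : Fin (n + 1) → Bool) t = false ∧
        (Fin.cons false s : Fin (n + 1) → Bool) (t + 1) = true} := by
  rw [cons1Row, card_filter, card_filter, ← Fin.sum_univ_eq_sum_range, Fin.sum_univ_castSucc]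
  simp only [Fin.last_add_one, Fin.cons_zero, Bool.false_eq_true, and_false, if_false, add_zero,
    Fin.coeSucc_eq_succ, Fin.cons_succ, cons_false_eq_rowExt s (Fin.castSucc _), rowExt_coe]
  refine sum_congr rfl fun j _ => if_congr ?_ rfl rfl
  simp only [Fin.val_castSucc]
  by_cases hj : (j : ℕ) = 0 <;> simp [hj, and_comm]

theorem card_ne_succ_cons_false (n : ℕ) (s : Fin n → Bool) :
    #{t : Fin (n + 1) | (Fin.cons false s : Fin (n + 1) → Bool) t ≠
      (Fin.cons false s : Fin (n + 1) → Bool) (t + 1)} = 2 * cons1Row n s := by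
  rw [cons1Row_eq_card_rise]
  exact card_ne_eq_two_mul_card_rise (Equiv.addRight 1) _

theorem sum_wDist_eq {m N : ℕ} {ι : Type*} [Fintype ι] (f : Fin m → ℕ)
    (B : Fin m → Fin N → Bool) (a b : ι → Fin N) :
    ∑ t, wDist f B (a t) (b t) = ∑ i, f i * #{t | B i (a t) ≠ B i (b t)} := by
  simp only [wDist, card_filter, mul_sum, ite_not]
  exact sum_comm

section Tour

variable {m n : ℕ} (A : Fin m → Fin n → Bool) (f : Fin m → ℕ)

theorem appendZero_castSucc (i : Fin m) (j : Fin n) : appendZero A i j.castSucc = A i j := by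
  simp [appendZero]

theorem appendZero_last (i : Fin m) : appendZero A i (Fin.last n) = false := by
  simp [appendZero]

theorem sum_wDist_tour_from_last (c : Fin (n + 1) → Fin (n + 1)) (p : Fin n → Fin n)
    (h0 : c 0 = Fin.last n) (hsucc : ∀ j, c j.succ = (p j).castSucc) :
    ∑ t, wDist f (appendZero A) (c t) (c (t + 1)) =
      2 * ∑ i, f i * cons1Row n (fun j => A i (p j)) := by
  have hrow : ∀ i t, appendZero A i (c t) =
      (Fin.cons false (fun j => A i (p j)) : Fin (n + 1) → Bool) t := by
    intro i t
    cases t using Fin.cases with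
    | zero => simp [h0, appendZero_last]
    | succ j => simp [hsucc, appendZero_castSucc]
  rw [sum_wDist_eq, mul_sum]
  refine sum_congr rfl fun i _ => ?_
  rw [mul_left_comm, ← card_ne_succ_cons_false]
  simp only [hrow]

theorem sum_wDist_tour (σ : Fin (n + 1) → Fin (n + 1)) (k₀ : Fin (n + 1)) (p : Fin n → Fin n)
    (hk : σ k₀ = Fin.last n) (hp : ∀ j, σ (k₀ + j.succ) = (p j).castSucc) :
    ∑ k, wDist f (appendZero A) (σ k) (σ (k + 1)) =
      2 * ∑ i, f i * cons1Row n (fun j => A i (p j)) := by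
  rw [← sum_wDist_tour_from_last A f (fun t => σ (k₀ + t)) p (by simpa) hp]
  exact (Fintype.sum_equiv (Equiv.addLeft k₀) _ _ fun t => by simp [add_assoc]).symm

end Tour

theorem exists_perm_zero_last_succ {n : ℕ} (π : Equiv.Perm (Fin n)) :
    ∃ σ : Equiv.Perm (Fin (n + 1)), σ 0 = Fin.last n ∧ ∀ j, σ j.succ = (π j).castSucc :=
  ⟨(finSuccEquiv n).trans (π.optionCongr.trans finSuccEquivLast.symm), by simp, by simp⟩

theorem Fin.ofNat_add_one_eq_succ {n : ℕ} (j : Fin n) :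
    Fin.ofNat (n + 1) ((j : ℕ) + 1) = j.succ :=
  Fin.ext (by simp [Nat.mod_eq_of_lt (Nat.succ_lt_succ j.isLt)])

/-- Under the weighted Hamming distance, any tour of the columns of A'
has length 2·Σ_k f(k)·cons1(r_k^{π(A)}), where π reads the tour after the zero column;
consequently a minimum-length tour yields a permutation minimizing the weighted sum. -/
theorem stmt8 (m n : ℕ) (A : Fin m → Fin n → Bool) (f : Fin m → ℕ)
    (σ : Equiv.Perm (Fin (n + 1))) (k₀ : Fin (n + 1)) (hk : σ k₀ = Fin.last n)
    (π : Equiv.Perm (Fin n))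
    (hπ : ∀ j : Fin n, ((σ (k₀ + (Fin.ofNat (n + 1) ((j : ℕ) + 1 : ℕ)))) : ℕ) = (π j : ℕ)) :
    (∑ k : Fin (n + 1), wDist f (appendZero A) (σ k) (σ (k + 1)) =
        2 * ∑ i, f i * cons1Row n (fun j => A i (π j))) ∧
      ((∀ σ' : Equiv.Perm (Fin (n + 1)),
          ∑ k : Fin (n + 1), wDist f (appendZero A) (σ k) (σ (k + 1)) ≤
            ∑ k : Fin (n + 1), wDist f (appendZero A) (σ' k) (σ' (k + 1))) →
        ∀ π' : Equiv.Perm (Fin n),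
          ∑ i, f i * cons1Row n (fun j => A i (π j)) ≤
            ∑ i, f i * cons1Row n (fun j => A i (π' j))) := by
  have hπ' : ∀ j, σ (k₀ + j.succ) = (π j).castSucc := fun j =>
    Fin.ext <| by rw [← Fin.ofNat_add_one_eq_succ]; exact hπ j
  have hlen := sum_wDist_tour A f σ k₀ π hk hπ'
  refine ⟨hlen, fun hmin π' => ?_⟩
  obtain ⟨σ', h0, hsucc⟩ := exists_perm_zero_last_succ π'
  have hlen' := sum_wDist_tour A f σ' 0 π' h0 (by simpa using hsucc)
  have := hmin σ'
  omega
end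

section
/- Let A be a binary matrix with n columns and exactly p ones, and let C_1,...,C_q be nonempty sets of columns such that some permutation makes each C_k consecutive. Define the penalized distance D(c_i,c_j) = d_h(c_i,c_j) + (2p+1)·Σ_{k=1}^q |1_{C_k}(c_i) − 1_{C_k}(c_j)| on the columns of A' (A with a zero column appended). Then any minimum-length tour of the columns of A' under D, read as a column permutation π of A starting after the zero column, makes every C_k consecutive in π(A), and among all permutations making every C_k consecutive, π minimizes cons1(π(A)). -/
open Finset

/-- The set of columns C occupies a contiguous interval of positions in π(A). -/
def consecIn {n : ℕ} (π : Equiv.Perm (Fin n)) (C : Finset (Fin n)) : Prop :=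
  ∃ a : ℕ, ∀ j : Fin n, π j ∈ C ↔ a ≤ (j : ℕ) ∧ (j : ℕ) < a + C.card

/-- The penalized distance on the columns of A' (A with a zero column appended):
Hamming distance plus (2p+1) times the number of sets C_k in which exactly one of the
two columns lies. -/
def pDist {m n : ℕ} (A : Fin m → Fin n → Bool) (p q : ℕ) (C : Fin q → Finset (Fin n))
    (a b : Fin (n + 1)) : ℕ :=
  colHam (appendZero A) a b +
    (2 * p + 1) *
      ∑ k, (if (a ∈ (C k).image Fin.castSucc ↔ b ∈ (C k).image Fin.castSucc) then 0 else 1)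

/-! Cut the optimal tour at the zero column. Along the resulting path, every row of `A` and the
indicator of every `C_k` start and end at `0`, so each changes value exactly twice per block of
ones: the tour through a column order `π` has length `2·cons1(π(A)) + (2p+1)·2·Σₖ bₖ(π)`, where
`bₖ(π) ≥ 1` is the number of blocks of `C_k` in `π`, and `bₖ(π) = 1` iff `C_k` is consecutive in
`π`. Since `cons1 ≤ p`, a single extra block of some `C_k` costs `4p + 2 > 2p`, more than any
saving in `cons1`; so an optimal tour makes every `C_k` consecutive, and among such orders it
minimizes `cons1`. -/

section Ascents

variable (b : ℕ → Bool)

def ascents (N : ℕ) : Finset ℕ :=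
  (range N).filter (fun j => b j = false ∧ b (j + 1) = true)

variable {b}

theorem mem_ascents {N j : ℕ} :
    j ∈ ascents b N ↔ j < N ∧ b j = false ∧ b (j + 1) = true := by
  rw [ascents, mem_filter, mem_range]

theorem sum_changes_add_eq_two_mul_card_ascents (hb : b 0 = false) (N : ℕ) :
    (∑ j ∈ range N, if b j = b (j + 1) then 0 else 1) + (if b N = true then 1 else 0) =
      2 * #(ascents b N) := by
  induction N with
  | zero => simp [hb, ascents]
  | succ N ih =>
    rw [sum_range_succ, ascents, range_add_one, filter_insert]
    rw [ascents] at ih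
    cases h1 : b N <;> cases h2 : b (N + 1) <;>
      simp [h1, h2, card_insert_of_notMem] at ih ⊢ <;> omega

theorem forall_le_eq_false_of_no_ascent {a : ℕ} (hb : b 0 = false)
    (h : ∀ j < a, b j = false → b (j + 1) = false) : ∀ j ≤ a, b j = false := by
  intro j hj
  induction j with
  | zero => exact hb
  | succ j ih => exact h j (by omega) (ih (by omega))

theorem Antitone.bool_eq_true_iff_lt_find {f : ℕ → Bool} (hf : Antitone f)
    (h : ∃ i, f i = false) (i : ℕ) : f i = true ↔ i < Nat.find h := by
  constructor
  · intro hi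
    by_contra! hle
    have := hf hle
    rw [Nat.find_spec h, hi] at this
    exact absurd this (by decide)
  · intro hi
    simpa using Nat.find_min h hi

theorem card_ascents_eq_one_iff {N : ℕ} (hb : b 0 = false) (hN : ∀ j > N, b j = false) :
    #(ascents b N) = 1 ↔ ∃ a e, a < e ∧ ∀ j, b j = true ↔ a < j ∧ j ≤ e := by
  constructor
  · intro h1
    obtain ⟨a, ha⟩ := card_eq_one.mp h1
    have haN : a ∈ ascents b N := by simp [ha]
    have hno : ∀ j ≠ a, b j = false → b (j + 1) = false := by
      intro j hja hj
      by_contra! hj1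
      have hjN : j < N := by
        by_contra!
        exact hj1 (Bool.not_eq_true _ ▸ hN (j + 1) (by omega))
      have : j ∈ ascents b N := mem_ascents.mpr ⟨hjN, hj, by simpa using hj1⟩
      exact hja (by simpa [ha] using this)
    have hlow := forall_le_eq_false_of_no_ascent hb (a := a) (fun j hj => hno j (by omega))
    have hanti : Antitone (fun i => b (a + 1 + i)) := by
      refine antitone_nat_of_succ_le fun i => ?_
      cases hi : b (a + 1 + i)
      · simp [← add_assoc, hno (a + 1 + i) (by omega) hi]
      · exact le_top
    have hend : ∃ i, b (a + 1 + i) = false := ⟨N, hN _ (by omega)⟩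
    have hstart : b (a + 1 + 0) = true := (mem_ascents.mp haN).2.2
    have hpos : 0 < Nat.find hend := (hanti.bool_eq_true_iff_lt_find hend 0).mp hstart
    refine ⟨a, a + Nat.find hend, by omega, fun j => ?_⟩
    rcases le_or_gt j a with hja | hja
    · simp only [hlow j hja, Bool.false_eq_true, false_iff, not_and, not_le]
      omega
    · obtain ⟨i, rfl⟩ : ∃ i, j = a + 1 + i := ⟨j - (a + 1), by omega⟩
      rw [hanti.bool_eq_true_iff_lt_find hend i]
      omega
  · rintro ⟨a, e, hae, hab⟩
    have heN : e ≤ N := by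
      by_contra!
      have hbe := (hab e).mpr ⟨hae, le_rfl⟩
      simp [hN e this] at hbe
    refine card_eq_one.mpr ⟨a, ?_⟩
    ext j
    simp only [mem_ascents, mem_singleton, ← Bool.not_eq_true, hab]
    omega

end Ascents

section Blocks

variable {n : ℕ}

theorem rowExt_val (r : Fin n → Bool) (j : Fin n) : rowExt n r j = r j := by
  rw [rowExt, dif_pos j.isLt]

/-- The row `r` with a zero in front: a block of ones of `r` starting at position `j` becomes an
ascent of `padRow r` at `j`. -/
def padRow (r : Fin n → Bool) : ℕ → Bool
  | 0 => false
  | j + 1 => rowExt n r j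

@[simp]
theorem padRow_zero (r : Fin n → Bool) : padRow r 0 = false := rfl

@[simp]
theorem padRow_val_succ (r : Fin n → Bool) (j : Fin n) : padRow r (j + 1) = r j :=
  rowExt_val r j

theorem padRow_of_lt (r : Fin n → Bool) {j : ℕ} (hj : n < j) : padRow r j = false := by
  obtain ⟨i, rfl⟩ : ∃ i, j = i + 1 := ⟨j - 1, by omega⟩
  simp only [padRow, rowExt, dif_neg (show ¬i < n by omega)]

theorem cons1Row_eq_card_ascents (r : Fin n → Bool) :
    cons1Row n r = #(ascents (padRow r) n) := by
  rw [cons1Row, ascents]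
  congr 1
  refine filter_congr fun j _ => ?_
  cases j <;> simp [padRow, and_comm]

theorem cons1Row_eq_one_iff (r : Fin n → Bool) :
    cons1Row n r = 1 ↔ ∃ a e, a < e ∧ e ≤ n ∧ ∀ j : Fin n, r j = true ↔ a ≤ j ∧ (j : ℕ) < e := by
  rw [cons1Row_eq_card_ascents, card_ascents_eq_one_iff (padRow_zero r)
    (fun j hj => padRow_of_lt r hj)]
  constructor
  · rintro ⟨a, e, hae, hr⟩
    have hen : e ≤ n := by
      by_contra!
      simpa [padRow_of_lt r this] using (hr e).mpr ⟨hae, le_rfl⟩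
    refine ⟨a, e, hae, hen, fun j => ?_⟩
    rw [← padRow_val_succ r j, hr]
    omega
  · rintro ⟨a, e, hae, hen, hr⟩
    refine ⟨a, e, hae, fun j => ?_⟩
    rcases j with _ | j
    · simp
    · rcases lt_or_ge j n with hj | hj
      · rw [show j = ((⟨j, hj⟩ : Fin n) : ℕ) from rfl, padRow_val_succ, hr]
        omega
      · simp only [padRow_of_lt r (show n < j + 1 by omega), Bool.false_eq_true, false_iff]
        omega

theorem one_le_cons1Row {r : Fin n → Bool} (h : ∃ j, r j = true) : 1 ≤ cons1Row n r := by
  obtain ⟨j, hj⟩ := h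
  by_contra! h0
  have hnone : ascents (padRow r) n = ∅ := by
    rw [← card_eq_zero, ← cons1Row_eq_card_ascents]
    omega
  have hflat : ∀ i < n + 1, padRow r i = false → padRow r (i + 1) = false := by
    intro i hi hri
    by_contra! hri1
    have : i ∈ ascents (padRow r) n := by
      refine mem_ascents.mpr ⟨?_, hri, by simpa using hri1⟩
      by_contra!
      exact hri1 (by simp [padRow_of_lt r (show n < i + 1 by omega)])
    simp [hnone] at this
  have := forall_le_eq_false_of_no_ascent (padRow_zero r) hflat (j + 1) (by omega)
  simp [hj] at this

theorem cons1Row_le_card (r : Fin n → Bool) : cons1Row n r ≤ #{j | r j = true} := by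
  have hcard : #((range n).filter (fun t => rowExt n r t = true)) = #{j | r j = true} := by
    rw [card_filter, card_filter,
      ← Fin.sum_univ_eq_sum_range (fun t => if rowExt n r t = true then 1 else 0) n]
    simp only [rowExt_val]
  rw [← hcard]
  exact card_le_card fun t ht => by
    rw [mem_filter] at ht ⊢
    exact ⟨ht.1, ht.2.1⟩

theorem card_filter_le_val_lt (a e : ℕ) :
    #{j : Fin n | a ≤ (j : ℕ) ∧ (j : ℕ) < e} = min e n - a := by
  rw [← card_map Fin.valEmbedding, ← Nat.card_Ico]
  congr 1
  ext x
  simp only [mem_map, mem_filter, mem_univ, true_and, Fin.valEmbedding_apply, mem_Ico]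
  constructor
  · rintro ⟨j, hj, rfl⟩
    omega
  · intro hx
    exact ⟨⟨x, by omega⟩, by simp only; omega, rfl⟩

theorem card_filter_perm_mem (π : Equiv.Perm (Fin n)) (S : Finset (Fin n)) :
    #{j | π j ∈ S} = #S := by
  rw [card_filter, Equiv.sum_comp π (fun j => if j ∈ S then 1 else 0), ← card_filter]
  simp

theorem card_eq_of_forall_perm_mem_iff {π : Equiv.Perm (Fin n)} {C : Finset (Fin n)} {a e : ℕ}
    (h : ∀ j : Fin n, π j ∈ C ↔ a ≤ j ∧ (j : ℕ) < e) : #C = min e n - a := by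
  rw [← card_filter_perm_mem π C, ← card_filter_le_val_lt]
  exact congrArg card (filter_congr fun j _ => h j)

theorem consecIn_iff_exists_interval {π : Equiv.Perm (Fin n)} {C : Finset (Fin n)}
    (hC : C.Nonempty) :
    consecIn π C ↔ ∃ a e, a < e ∧ e ≤ n ∧ ∀ j : Fin n, π j ∈ C ↔ a ≤ j ∧ (j : ℕ) < e := by
  have hpos := hC.card_pos
  constructor
  · rintro ⟨a, ha⟩
    have hcard := card_eq_of_forall_perm_mem_iff ha
    exact ⟨a, a + #C, by omega, by omega, ha⟩
  · rintro ⟨a, e, hae, hen, ha⟩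
    have hcard := card_eq_of_forall_perm_mem_iff ha
    exact ⟨a, fun j => by rw [ha]; omega⟩

theorem consecIn_iff_cons1Row_eq_one {π : Equiv.Perm (Fin n)} {C : Finset (Fin n)}
    (hC : C.Nonempty) : consecIn π C ↔ cons1Row n (fun j => decide (π j ∈ C)) = 1 := by
  simp only [consecIn_iff_exists_interval hC, cons1Row_eq_one_iff, decide_eq_true_eq]

theorem sum_cyclic_changes_eq_two_mul_cons1Row (g : Fin (n + 1) → Bool) (r : Fin n → Bool)
    (h0 : g 0 = false) (hr : ∀ j, g j.succ = r j) :
    (∑ k, if g k = g (k + 1) then 0 else 1) = 2 * cons1Row n r := by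
  have hg : ∀ k : Fin (n + 1), g k = padRow r k := by
    refine Fin.cases (by simp [h0]) fun j => ?_
    rw [hr, Fin.val_succ, padRow_val_succ]
  have hg1 : ∀ k : Fin (n + 1), g (k + 1) = padRow r (k + 1) := by
    intro k
    by_cases hk : k = Fin.last n
    · simp [hk, h0, padRow_of_lt r]
    · rw [hg, Fin.val_add_one, if_neg hk]
  have hend : padRow r (n + 1) = false := padRow_of_lt r (by omega)
  have hlast : n ∉ ascents (padRow r) (n + 1) := by simp [mem_ascents, hend]
  rw [sum_congr rfl fun k _ => by rw [hg k, hg1 k]]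
  have key := sum_changes_add_eq_two_mul_card_ascents (padRow_zero r) (n + 1)
  rw [hend, if_neg Bool.false_ne_true, add_zero] at key
  rw [Fin.sum_univ_eq_sum_range (fun j => if padRow r j = padRow r (j + 1) then 0 else 1), key,
    cons1Row_eq_card_ascents, ascents, range_add_one, filter_insert,
    if_neg (by simpa [mem_ascents] using hlast), ascents]

end Blocks

section Tours

variable {m n q : ℕ}

theorem colHam_eq_sum {N : ℕ} (B : Fin m → Fin N → Bool) (a b : Fin N) :
    colHam B a b = ∑ i, if B i a = B i b then 0 else 1 := by
  simp only [colHam, hammingDist, card_filter, ite_not]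

theorem exists_tour (k₀ : Fin (n + 1)) (π : Equiv.Perm (Fin n)) :
    ∃ σ : Equiv.Perm (Fin (n + 1)), σ k₀ = Fin.last n ∧ ∀ j, σ (k₀ + j.succ) = (π j).castSucc := by
  let τ := (Equiv.Perm.decomposeFin.symm (0, π)).trans (finRotate (n + 1)).symm
  refine ⟨(Equiv.subRight k₀).trans τ, ?_, fun j => ?_⟩
  · simp only [τ, Equiv.trans_apply, Equiv.subRight_apply, sub_self,
      Equiv.Perm.decomposeFin_symm_apply_zero, Equiv.symm_apply_eq, finRotate_last]
  · simp only [τ, Equiv.trans_apply, Equiv.subRight_apply, add_sub_cancel_left,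
      Equiv.Perm.decomposeFin_symm_apply_succ, Equiv.swap_self, Equiv.refl_apply,
      Equiv.symm_apply_eq, finRotate_apply, Fin.coeSucc_eq_succ]

variable (A : Fin m → Fin n → Bool) (p : ℕ) (C : Fin q → Finset (Fin n))

theorem sum_pDist_of_path {τ : Fin (n + 1) → Fin (n + 1)} {π : Equiv.Perm (Fin n)}
    (h0 : τ 0 = Fin.last n) (hτ : ∀ j, τ j.succ = (π j).castSucc) :
    ∑ t, pDist A p q C (τ t) (τ (t + 1)) =
      2 * cons1 (fun i j => A i (π j)) +
        (2 * p + 1) * (2 * ∑ k, cons1Row n (fun j => decide (π j ∈ C k))) := by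
  have hrow : ∀ i, (∑ t, if appendZero A i (τ t) = appendZero A i (τ (t + 1)) then 0 else 1) =
      2 * cons1Row n (fun j => A i (π j)) :=
    fun i => sum_cyclic_changes_eq_two_mul_cons1Row _ _ (by simp [h0, appendZero])
      fun j => by simp [hτ, appendZero]
  have hset : ∀ k, (∑ t, if (τ t ∈ (C k).image Fin.castSucc ↔
      τ (t + 1) ∈ (C k).image Fin.castSucc) then 0 else 1) =
        2 * cons1Row n (fun j => decide (π j ∈ C k)) := by
    intro k
    simpa only [decide_eq_decide] using sum_cyclic_changes_eq_two_mul_cons1Row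
      (fun t => decide (τ t ∈ (C k).image Fin.castSucc)) _
      (by simp [h0, Fin.castSucc_ne_last]) fun j => by simp [hτ]
  simp only [pDist, colHam_eq_sum, sum_add_distrib, ← mul_sum]
  rw [sum_comm, sum_congr rfl fun i _ => hrow i, ← mul_sum, sum_comm,
    sum_congr rfl fun k _ => hset k, ← mul_sum, cons1]

theorem sum_pDist_of_tour {σ : Equiv.Perm (Fin (n + 1))} {k₀ : Fin (n + 1)}
    {π : Equiv.Perm (Fin n)} (hk : σ k₀ = Fin.last n)
    (hπ : ∀ j, σ (k₀ + j.succ) = (π j).castSucc) :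
    ∑ k, pDist A p q C (σ k) (σ (k + 1)) =
      2 * cons1 (fun i j => A i (π j)) +
        (2 * p + 1) * (2 * ∑ k, cons1Row n (fun j => decide (π j ∈ C k))) := by
  rw [← sum_pDist_of_path A p C (τ := fun t => σ (k₀ + t)) (by simpa using hk) hπ]
  exact (Fintype.sum_equiv (Equiv.addLeft k₀) _ _ fun t => by simp [add_assoc]).symm

theorem cons1_perm_le (π : Equiv.Perm (Fin n)) :
    cons1 (fun i j => A i (π j)) ≤ ∑ i, #{j | A i j = true} := by
  refine sum_le_sum fun i _ => (cons1Row_le_card _).trans_eq ?_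
  rw [card_filter, card_filter]
  exact Equiv.sum_comp π (fun j => if A i j = true then 1 else 0)

variable {C}

theorem one_le_cons1Row_decide_mem {π : Equiv.Perm (Fin n)} {S : Finset (Fin n)}
    (hS : S.Nonempty) : 1 ≤ cons1Row n (fun j => decide (π j ∈ S)) := by
  obtain ⟨x, hx⟩ := hS
  exact one_le_cons1Row ⟨π.symm x, by simpa using hx⟩

theorem card_le_sum_cons1Row (hC : ∀ k, (C k).Nonempty) (π : Equiv.Perm (Fin n)) :
    q ≤ ∑ k, cons1Row n (fun j => decide (π j ∈ C k)) :=
  calc q = ∑ _k : Fin q, 1 := by simp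
    _ ≤ _ := sum_le_sum fun k _ => one_le_cons1Row_decide_mem (hC k)

theorem sum_cons1Row_eq_card_iff (hC : ∀ k, (C k).Nonempty) (π : Equiv.Perm (Fin n)) :
    ∑ k, cons1Row n (fun j => decide (π j ∈ C k)) = q ↔ ∀ k, consecIn π (C k) := by
  simp only [consecIn_iff_cons1Row_eq_one (hC _)]
  have hones : ∑ _k : Fin q, 1 = q := by simp
  constructor
  · intro h k
    exact ((sum_eq_sum_iff_of_le fun k _ => one_le_cons1Row_decide_mem (hC k)).mp
      (hones.trans h.symm) k (mem_univ k)).symm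
  · intro h
    simp [h]

end Tours

/-- a minimum-length tour under the penalized distance, read as a column
permutation π after the zero column, makes every C_k consecutive, and among all such
permutations it minimizes cons1. -/
theorem stmt10 (m n q : ℕ) (A : Fin m → Fin n → Bool)
    (p : ℕ) (hp : p = ∑ i, (Finset.univ.filter (fun j => A i j = true)).card)
    (C : Fin q → Finset (Fin n)) (hCne : ∀ k, (C k).Nonempty)
    (hfeas : ∃ π₀ : Equiv.Perm (Fin n), ∀ k, consecIn π₀ (C k))
    (σ : Equiv.Perm (Fin (n + 1)))
    (hmin : ∀ σ' : Equiv.Perm (Fin (n + 1)),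
      ∑ k : Fin (n + 1), pDist A p q C (σ k) (σ (k + 1)) ≤
        ∑ k : Fin (n + 1), pDist A p q C (σ' k) (σ' (k + 1)))
    (k₀ : Fin (n + 1)) (hk : σ k₀ = Fin.last n)
    (π : Equiv.Perm (Fin n))
    (hπ : ∀ j : Fin n, ((σ (k₀ + (Fin.ofNat (n + 1) ((j : ℕ) + 1 : ℕ)))) : ℕ) = (π j : ℕ)) :
    (∀ k, consecIn π (C k)) ∧
      (∀ π' : Equiv.Perm (Fin n), (∀ k, consecIn π' (C k)) →
        cons1 (fun i j => A i (π j)) ≤ cons1 (fun i j => A i (π' j))) := by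
  have hσ : ∀ j, σ (k₀ + j.succ) = (π j).castSucc := fun j => by
    have hsucc : Fin.ofNat (n + 1) ((j : ℕ) + 1) = j.succ := by ext; simp
    ext
    rw [Fin.val_castSucc, ← hπ j, hsucc]
  have hle : ∀ π' : Equiv.Perm (Fin n),
      2 * cons1 (fun i j => A i (π j)) +
          (2 * p + 1) * (2 * ∑ k, cons1Row n (fun j => decide (π j ∈ C k))) ≤
        2 * cons1 (fun i j => A i (π' j)) +
          (2 * p + 1) * (2 * ∑ k, cons1Row n (fun j => decide (π' j ∈ C k))) := by
    intro π'
    obtain ⟨σ', hk', hσ'⟩ := exists_tour k₀ π'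
    rw [← sum_pDist_of_tour A p C hk hσ, ← sum_pDist_of_tour A p C hk' hσ']
    exact hmin σ'
  obtain ⟨π₀, hπ₀⟩ := hfeas
  have hconsec : ∀ k, consecIn π (C k) := by
    have h₀ := hle π₀
    have hc₀ : cons1 (fun i j => A i (π₀ j)) ≤ p := hp ▸ cons1_perm_le A π₀
    rw [(sum_cons1Row_eq_card_iff hCne π₀).mpr hπ₀] at h₀
    rw [← sum_cons1Row_eq_card_iff hCne]
    refine le_antisymm ?_ (card_le_sum_cons1Row hCne π)
    nlinarith
  refine ⟨hconsec, fun π' hπ' => ?_⟩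
  have h' := hle π'
  rw [(sum_cons1Row_eq_card_iff hCne π).mpr hconsec,
    (sum_cons1Row_eq_card_iff hCne π').mpr hπ'] at h'
  omega
end

section
/- Let A be a binary matrix with exactly two 1-entries per row and pairwise distinct rows, and let π be a column permutation such that cons1(π(A)) ≤ 2m − (n−1), where m is the number of rows and n the number of columns. Then for every position i ∈ {1,...,n−1} there exists a row of A whose two 1-entries lie exactly in the columns at positions i and i+1 of π(A). -/
open Finset

lemma cons1Row_pair (n : ℕ) (r : Fin n → Bool) (a b : Fin n) (hab : (a:ℕ) < (b:ℕ))
    (hr : ∀ j, r j = true ↔ j = a ∨ j = b) :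
    cons1Row n r = if (b:ℕ) = (a:ℕ) + 1 then 1 else 2 := by
  have hrow : ∀ j : ℕ, rowExt n r j = true ↔ (j = (a:ℕ) ∨ j = (b:ℕ)) := by
    intro j
    unfold rowExt
    split_ifs with hj
    · rw [hr]
      constructor
      · rintro (h | h)
        · exact Or.inl (congrArg Fin.val h)
        · exact Or.inr (congrArg Fin.val h)
      · rintro (h | h)
        · exact Or.inl (Fin.ext h)
        · exact Or.inr (Fin.ext h)
    · constructor
      · intro h; simp at h
      · rintro (h | h)
        · exact absurd (h ▸ a.isLt) hj
        · exact absurd (h ▸ b.isLt) hj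
  have key : (Finset.range n).filter
      (fun j => rowExt n r j = true ∧ (j = 0 ∨ rowExt n r (j - 1) = false))
      = if (b:ℕ) = (a:ℕ) + 1 then {(a:ℕ)} else {(a:ℕ), (b:ℕ)} := by
    have hb0 : (b:ℕ) ≠ 0 := by omega
    ext j
    simp only [Finset.mem_filter, Finset.mem_range]
    split_ifs with hadj
    · simp only [Finset.mem_singleton]
      constructor
      · rintro ⟨_, h1, h2⟩
        rcases (hrow j).mp h1 with hj | hj
        · exact hj
        · exfalso
          rcases h2 with h2 | h2
          · omega
          · have : rowExt n r (j-1) = true := (hrow _).mpr (Or.inl (by omega))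
            rw [this] at h2
            simp at h2
      · intro hj
        subst hj
        refine ⟨a.isLt, (hrow _).mpr (Or.inl rfl), ?_⟩
        rcases Nat.eq_zero_or_pos (a:ℕ) with h0 | h0
        · exact Or.inl h0
        · right
          cases h' : rowExt n r ((a:ℕ)-1) with
          | false => rfl
          | true => exfalso; rcases (hrow _).mp h' with h'' | h'' <;> omega
    · simp only [Finset.mem_insert, Finset.mem_singleton]
      constructor
      · rintro ⟨_, h1, _⟩
        exact (hrow j).mp h1
      · rintro (hj | hj)
        · subst hj
          refine ⟨a.isLt, (hrow _).mpr (Or.inl rfl), ?_⟩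
          rcases Nat.eq_zero_or_pos (a:ℕ) with h0 | h0
          · exact Or.inl h0
          · right
            cases h' : rowExt n r ((a:ℕ)-1) with
            | false => rfl
            | true => exfalso; rcases (hrow _).mp h' with h'' | h'' <;> omega
        · subst hj
          refine ⟨b.isLt, (hrow _).mpr (Or.inr rfl), Or.inr ?_⟩
          cases h' : rowExt n r ((b:ℕ)-1) with
          | false => rfl
          | true => exfalso; rcases (hrow _).mp h' with h'' | h'' <;> omega
  unfold cons1Row
  rw [key]
  split_ifs with hadj
  · simp
  · rw [Finset.card_insert_of_notMem (by simp; omega), Finset.card_singleton]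

/-- with two ones per row, pairwise distinct rows and
cons1(π(A)) ≤ 2m − (n−1), every pair of adjacent positions of π(A) carries
the two ones of some row. -/
theorem stmt18 (m n : ℕ) (A : Fin m → Fin n → Bool)
    (htwo : ∀ i, (Finset.univ.filter (fun j => A i j = true)).card = 2)
    (hdist : ∀ i i' : Fin m, i ≠ i' → A i ≠ A i')
    (π : Equiv.Perm (Fin n))
    (h : (cons1 (fun i j => A i (π j)) : ℤ) ≤ 2 * (m : ℤ) - ((n : ℤ) - 1)) :
    ∀ i : ℕ, i + 1 < n →
      ∃ r : Fin m, ∀ j : Fin n,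
        A r (π j) = true ↔ ((j : ℕ) = i ∨ (j : ℕ) = i + 1) := by
  -- each row of the permuted matrix has exactly two ones
  have htwoB : ∀ i, (Finset.univ.filter (fun j => A i (π j) = true)).card = 2 := by
    intro i
    have heq : (Finset.univ.filter (fun j => A i (π j) = true))
        = (Finset.univ.filter (fun j => A i j = true)).map π.symm.toEmbedding := by
      ext j
      simp [Finset.mem_map_equiv]
    rw [heq, Finset.card_map, htwo]
  have hab : ∀ i, ∃ a b : Fin n, (a:ℕ) < (b:ℕ) ∧
      ∀ j, A i (π j) = true ↔ j = a ∨ j = b := by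
    intro i
    obtain ⟨x, y, hxy, hs⟩ := Finset.card_eq_two.mp (htwoB i)
    have hmem : ∀ j, (A i (π j) = true) ↔ (j = x ∨ j = y) := by
      intro j
      have : j ∈ Finset.univ.filter (fun j => A i (π j) = true)
          ↔ j ∈ ({x, y} : Finset (Fin n)) := by rw [hs]
      simpa using this
    rcases hxy.lt_or_gt with hlt | hlt
    · exact ⟨x, y, hlt, hmem⟩
    · exact ⟨y, x, hlt, fun j => (hmem j).trans or_comm⟩
  choose a b hlt hspec using hab
  set S : Finset (Fin m) := Finset.univ.filter (fun i => (b i:ℕ) = (a i:ℕ) + 1) with hS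
  -- compute cons1
  have hcons : cons1 (fun i j => A i (π j))
      = ∑ i : Fin m, (if (b i:ℕ) = (a i:ℕ) + 1 then 1 else 2) := by
    unfold cons1
    exact Finset.sum_congr rfl (fun i _ =>
      cons1Row_pair n _ (a i) (b i) (hlt i) (hspec i))
  have hsum : ∑ i : Fin m, (if (b i:ℕ) = (a i:ℕ) + 1 then 1 else 2)
      = S.card * 1 + (Finset.univ.filter (fun i => ¬ ((b i:ℕ) = (a i:ℕ) + 1))).card * 2 := by
    rw [Finset.sum_ite]
    simp [hS, mul_comm]
  have hcard : S.card + (Finset.univ.filter (fun i => ¬ ((b i:ℕ) = (a i:ℕ) + 1))).card = m := by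
    rw [hS]
    simpa using Finset.card_filter_add_card_filter_not
      (s := (Finset.univ : Finset (Fin m))) (p := fun i => (b i:ℕ) = (a i:ℕ) + 1)
  have hScard : n - 1 ≤ S.card := by
    rw [hcons, hsum] at h
    omega
  -- injectivity of the left-endpoint map on S
  have hinj : Set.InjOn (fun i => (a i : ℕ)) S := by
    intro i hi i' hi' hii'
    simp only [hS, Finset.coe_filter, Set.mem_setOf_eq, Finset.mem_univ, true_and] at hi hi'
    have ha : a i = a i' := Fin.ext hii'
    have hb : b i = b i' := Fin.ext (by omega)
    have hAeq : A i = A i' := by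
      funext k
      have h1 := hspec i (π.symm k)
      have h2 := hspec i' (π.symm k)
      rw [Equiv.apply_symm_apply] at h1 h2
      rw [Bool.eq_iff_iff, h1, h2, ha, hb]
    by_contra hne
    exact hdist i i' hne hAeq
  have himg : S.image (fun i => (a i : ℕ)) = Finset.range (n - 1) := by
    apply Finset.eq_of_subset_of_card_le
    · intro x hx
      obtain ⟨i, hi, hix⟩ := Finset.mem_image.mp hx
      simp only [hS, Finset.mem_filter, Finset.mem_univ, true_and] at hi
      have := (b i).isLt
      simp only [Finset.mem_range]
      omega
    · rw [Finset.card_image_of_injOn hinj, Finset.card_range]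
      exact hScard
  intro i hi
  have : i ∈ Finset.range (n - 1) := Finset.mem_range.mpr (by omega)
  rw [← himg] at this
  obtain ⟨r, hr, hri⟩ := Finset.mem_image.mp this
  simp only [hS, Finset.mem_filter, Finset.mem_univ, true_and] at hr
  refine ⟨r, fun j => ?_⟩
  rw [hspec r j, Fin.ext_iff, Fin.ext_iff]
  omega
end
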